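/- Let F ∈ ℂ^{2n×2n}, G ∈ ℂ^{2n×2m}, H ∈ ℂ^{2m×2n}, and suppose there exists an invertible Hermitian matrix Θ ∈ ℂ^{2n×2n} such that FΘ + ΘF† + GJ_mG† = 0 and G = −ΘH†J_m. Define Γ(s) := H(sI − F)^{−1}G + I. Then for every s ∈ ℂ such that both sI − F and −conj(s)I − F are invertible, Γ(−conj(s))† J_m Γ(s) = J_m. That is, the transfer function of a system satisfying the physical realizability equations is (J,J)-unitary at every point where it is defined. -/

import Mathlib

open Matrix

/-! Using `G = −ΘH†J` twice, the realizability equations say that `H†JH = Θ⁻¹(sI − F) + (−s̄I − F)†Θ⁻¹`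
for every `s`. Expanding `Γ(−s̄)†JΓ(s)`, this splits the quadratic term into two pieces, each of
which cancels one of the two cross terms `G†(−s̄I − F)^{-†}H†J` and `JH(sI − F)⁻¹G`. -/

/-- `J_k = [[I, 0],[0, −I]]`. -/
def Jmat (k : ℕ) : Matrix (Fin k ⊕ Fin k) (Fin k ⊕ Fin k) ℂ :=
  fromBlocks 1 0 0 (-1)

lemma Jmat_mul_self (k : ℕ) : Jmat k * Jmat k = 1 := by
  simp [Jmat, fromBlocks_multiply, ← fromBlocks_one]

lemma Jmat_conjTranspose (k : ℕ) : (Jmat k)ᴴ = Jmat k := by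
  simp [Jmat, fromBlocks_conjTranspose]

section Transfer

variable {m n α : Type*} [Fintype n] [DecidableEq m] [DecidableEq n] [CommRing α]

/-- With `A = s • 1 - F` this is the transfer function `Γ(s)` of the system `(F, G, H, I)`. -/
noncomputable def transferMatrix (H : Matrix m n α) (A : Matrix n n α) (G : Matrix n m α) :
    Matrix m m α :=
  H * A⁻¹ * G + 1

lemma conjTranspose_transferMatrix [StarRing α] (H : Matrix m n α) (A : Matrix n n α)
    (G : Matrix n m α) : (transferMatrix H A G)ᴴ = transferMatrix Gᴴ Aᴴ Hᴴ := by
  simp only [transferMatrix, conjTranspose_add, conjTranspose_one, conjTranspose_mul,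
    conjTranspose_nonsing_inv, Matrix.mul_assoc]

theorem transferMatrix_mul_mul_transferMatrix_eq [Fintype m] {J : Matrix m m α} {G : Matrix n m α}
    {G' : Matrix m n α} {K : Matrix n m α} {H : Matrix m n α} {P A C : Matrix n n α}
    (hA : IsUnit A.det) (hC : IsUnit C.det)
    (hKJ : K * J = -(P * G)) (hJH : J * H = -(G' * P)) (hKJH : K * J * H = P * A + C * P) :
    transferMatrix G' C K * J * transferMatrix H A G = J := by
  have hcross : G' * C⁻¹ * (K * J * H) * A⁻¹ * G = G' * C⁻¹ * P * G + G' * P * A⁻¹ * G := by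
    rw [hKJH]
    simp only [Matrix.mul_add, Matrix.add_mul, Matrix.mul_assoc, mul_nonsing_inv_cancel_left _ _ hA,
      nonsing_inv_mul_cancel_left _ _ hC]
  calc transferMatrix G' C K * J * transferMatrix H A G
      = J + G' * C⁻¹ * (K * J) + (J * H) * A⁻¹ * G + G' * C⁻¹ * (K * J * H) * A⁻¹ * G := by
        simp only [transferMatrix, Matrix.add_mul, Matrix.mul_add, Matrix.one_mul,
          Matrix.mul_one, Matrix.mul_assoc]
        abel
    _ = J := by
        rw [hcross, hKJ, hJH]
        simp only [Matrix.mul_neg, Matrix.neg_mul, Matrix.mul_assoc]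
        abel

theorem smul_one_sub_mul_add_mul_neg_smul_one_sub (s : α) (F F' Θ : Matrix n n α) :
    (s • 1 - F) * Θ + Θ * (-s • 1 - F') = -(F * Θ + Θ * F') := by
  simp only [Matrix.sub_mul, Matrix.mul_sub, Matrix.smul_mul, Matrix.mul_smul, Matrix.one_mul,
    Matrix.mul_one, neg_smul, Matrix.mul_neg]
  abel

theorem inv_mul_mul_inv_eq_of_eq_mul_add_mul {X A C Θ : Matrix n n α} (hΘ : IsUnit Θ.det)
    (hX : X = A * Θ + Θ * C) : Θ⁻¹ * X * Θ⁻¹ = Θ⁻¹ * A + C * Θ⁻¹ := by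
  rw [hX, Matrix.mul_add, Matrix.add_mul, Matrix.mul_assoc, Matrix.mul_assoc A,
    mul_nonsing_inv _ hΘ, Matrix.mul_one, nonsing_inv_mul_cancel_left _ _ hΘ]

end Transfer

/-- if `(F, G, H, I)` satisfies the physical realizability equations
`FΘ + ΘF† + GJ_mG† = 0` and `G = −ΘH†J_m` for some invertible Hermitian `Θ`, then its
transfer function `Γ(s) = H(sI − F)⁻¹G + I` is `(J,J)`-unitary at every point where it is
defined: `Γ(−conj(s))† J_m Γ(s) = J_m`. -/
theorem physically_realizable_transfer_JJ_unitary
    (n m : ℕ)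
    (F : Matrix (Fin n ⊕ Fin n) (Fin n ⊕ Fin n) ℂ)
    (G : Matrix (Fin n ⊕ Fin n) (Fin m ⊕ Fin m) ℂ)
    (H : Matrix (Fin m ⊕ Fin m) (Fin n ⊕ Fin n) ℂ)
    (Θ : Matrix (Fin n ⊕ Fin n) (Fin n ⊕ Fin n) ℂ)
    (hΘherm : Θ.IsHermitian)
    (hΘunit : IsUnit Θ)
    (hRic : F * Θ + Θ * Fᴴ + G * Jmat m * Gᴴ = 0)
    (hG : G = -(Θ * Hᴴ * Jmat m)) :
    ∀ s : ℂ,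
      IsUnit (s • (1 : Matrix (Fin n ⊕ Fin n) (Fin n ⊕ Fin n) ℂ) - F) →
      IsUnit ((-(starRingEnd ℂ) s) • (1 : Matrix (Fin n ⊕ Fin n) (Fin n ⊕ Fin n) ℂ) - F) →
      (H * ((-(starRingEnd ℂ) s) • (1 : Matrix (Fin n ⊕ Fin n) (Fin n ⊕ Fin n) ℂ) - F)⁻¹ * G + 1)ᴴ *
        Jmat m *
        (H * (s • (1 : Matrix (Fin n ⊕ Fin n) (Fin n ⊕ Fin n) ℂ) - F)⁻¹ * G + 1) = Jmat m := by
  intro s hA hB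
  set J := Jmat m
  set A : Matrix (Fin n ⊕ Fin n) (Fin n ⊕ Fin n) ℂ := s • 1 - F
  set B : Matrix (Fin n ⊕ Fin n) (Fin n ⊕ Fin n) ℂ := (-(starRingEnd ℂ) s) • 1 - F
  have hΘ : IsUnit Θ.det := (isUnit_iff_isUnit_det Θ).mp hΘunit
  have hBH : Bᴴ = (-s) • 1 - Fᴴ := by simp [B]
  have hHJ : Hᴴ * J = -(Θ⁻¹ * G) := by
    rw [hG, Matrix.mul_neg, neg_neg, Matrix.mul_assoc, nonsing_inv_mul_cancel_left _ _ hΘ]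
  have hJH : J * H = -(Gᴴ * Θ⁻¹) := by
    simpa [J, Jmat_conjTranspose, hΘherm.inv.eq] using congrArg conjTranspose hHJ
  have hGJG : G * J * Gᴴ = A * Θ + Θ * Bᴴ := by
    rw [hBH, smul_one_sub_mul_add_mul_neg_smul_one_sub, eq_neg_of_add_eq_zero_right hRic]
  have hHJH : Hᴴ * J * H = Θ⁻¹ * A + Bᴴ * Θ⁻¹ :=
    calc Hᴴ * J * H = Hᴴ * J * J * (J * H) := by
          rw [Matrix.mul_assoc (Hᴴ * J), ← Matrix.mul_assoc J J, Jmat_mul_self, Matrix.one_mul]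
      _ = Θ⁻¹ * (G * J * Gᴴ) * Θ⁻¹ := by
          rw [hHJ, hJH]
          simp only [Matrix.mul_neg, Matrix.neg_mul, neg_neg, Matrix.mul_assoc]
      _ = Θ⁻¹ * A + Bᴴ * Θ⁻¹ := inv_mul_mul_inv_eq_of_eq_mul_add_mul hΘ hGJG
  change (transferMatrix H B G)ᴴ * J * transferMatrix H A G = J
  rw [conjTranspose_transferMatrix]
  refine transferMatrix_mul_mul_transferMatrix_eq ((isUnit_iff_isUnit_det A).mp hA) ?_ hHJ hJH hHJH
  rw [det_conjTranspose]
  exact ((isUnit_iff_isUnit_det B).mp hB).star
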